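/- RATTLE steps are time-reversible with swapped Lagrange multipliers: if g(q) = 0 and ∇g(q)ᵀM⁻¹p = 0, and (q*, p*) is a RATTLE step from (q, p) with multipliers (λ₁, λ₂), then (q, −p) is a RATTLE step from (q*, −p*) with multipliers (λ₂, λ₁); that is, setting p̃_{1/2} = −p* − (h/2)∇U(q*) − (h/2)λ₂∇g(q*), one has q = q* + h M⁻¹ p̃_{1/2}, −p = p̃_{1/2} − (h/2)∇U(q) − (h/2)λ₁∇g(q), g(q) = 0, and ∇g(q)ᵀM⁻¹(−p) = 0. -/
import Mathlib


open Matrix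

/-- The gradient of `f : ℝ^ν → ℝ` in the standard basis. -/
noncomputable def grad {ν : ℕ} (f : (Fin ν → ℝ) → ℝ) (q : Fin ν → ℝ) : Fin ν → ℝ :=
  fun i => fderiv ℝ f q (Pi.single i 1)

/-- RATTLE steps are time-reversible with swapped Lagrange multipliers: if
`(q*, p*)` is a RATTLE step from `(q, p)` with multipliers `(λ₁, λ₂)` and
`(q,p)` lies on the cotangent constraint manifold, then `(q, −p)` is a RATTLE
step from `(q*, −p*)` with multipliers `(λ₂, λ₁)`. -/
theorem rattle_time_reversible
    (ν : ℕ) (h : ℝ) (hh : 0 < h)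
    (M : Matrix (Fin ν) (Fin ν) ℝ) (hM : IsUnit M.det)
    (U g : (Fin ν → ℝ) → ℝ)
    (hU : Differentiable ℝ U) (hg : Differentiable ℝ g)
    (q p qs ps : Fin ν → ℝ) (l1 l2 : ℝ)
    (hq : g q = 0)
    (hp : grad g q ⬝ᵥ (M⁻¹).mulVec p = 0)
    (hstepq : qs = q + h • (M⁻¹).mulVec
      (p - (h / 2) • grad U q - ((h / 2) * l1) • grad g q))
    (hstepp : ps = (p - (h / 2) • grad U q - ((h / 2) * l1) • grad g q)
      - (h / 2) • grad U qs - ((h / 2) * l2) • grad g qs)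
    (hqs : g qs = 0)
    (hps : grad g qs ⬝ᵥ (M⁻¹).mulVec ps = 0) :
    q = qs + h • (M⁻¹).mulVec
        (-ps - (h / 2) • grad U qs - ((h / 2) * l2) • grad g qs) ∧
      -p = (-ps - (h / 2) • grad U qs - ((h / 2) * l2) • grad g qs)
        - (h / 2) • grad U q - ((h / 2) * l1) • grad g q ∧
      g q = 0 ∧
      grad g q ⬝ᵥ (M⁻¹).mulVec (-p) = 0 := by
  have key : -ps - (h / 2) • grad U qs - ((h / 2) * l2) • grad g qs
      = -(p - (h / 2) • grad U q - ((h / 2) * l1) • grad g q) := by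
    rw [hstepp]; abel
  refine ⟨?_, ?_, hq, ?_⟩
  · rw [key, Matrix.mulVec_neg, smul_neg, hstepq]; abel
  · rw [key]; abel
  · rw [Matrix.mulVec_neg, dotProduct_neg, hp, neg_zero]
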